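/- For gamma-distributed resetting with density f_σ(t) = 4r² t e^{−2rt} (t > 0) and diffusive first passage distribution F_τ(t) = erfc(√(L²/(4Dt))), the success probability satisfies p = ∫₀^∞ erfc(√(L²/(4Dt))) · 4r² t e^{−2rt} dt = e^{−√(2rL²/D)} (1 + √(rL²/(2D))). -/

import Mathlib

/-!
Write `erfc √(A/t)` as a Gaussian tail integral and exchange the order of integration: since
`√(A/t) < u ↔ A/u² < t`, the inner integral becomes the tail `(1 + cT) e^{-cT}` of the Gamma(2, c)
law at `T = A/u²`. With `b = √(cA)` the remaining integrand is
`e^{-2b} (1 + b²/u²) e^{-(u - b/u)²}`.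
Glasser's substitution `v = u - b/u` maps `(0, ∞)` onto `ℝ` with `dv = (1 + b/u²) du`, and the
inversion `u ↦ b/u` shows that the weights `1` and `b/u²` contribute equally, so
`∫₀^∞ e^{-(u - b/u)²} du = √π/2 = ∫₀^∞ (b/u²) e^{-(u - b/u)²} du` and the integral is
`e^{-2b} (1 + b)`. The theorem is the case `A = L²/(4D)`, `c = 2r`.
-/

open MeasureTheory Real

/-- The complementary error function. -/
noncomputable def erfc (z : ℝ) : ℝ :=
  (2 / Real.sqrt π) * ∫ u in Set.Ioi z, Real.exp (-u ^ 2)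

open Set Filter Topology

noncomputable def gammaTwoPDF (c t : ℝ) : ℝ := c ^ 2 * t * exp (-(c * t))

section GammaTwo

variable {c : ℝ}

lemma continuous_gammaTwoPDF : Continuous (gammaTwoPDF c) := by
  unfold gammaTwoPDF; fun_prop

lemma integrableOn_gammaTwoPDF_Ioi (hc : 0 < c) (T : ℝ) : IntegrableOn (gammaTwoPDF c) (Ioi T) := by
  have hpos : IntegrableOn (gammaTwoPDF c) (Ioi 0) := by
    refine IntegrableOn.congr_fun (Integrable.const_mul (c := c ^ 2)
      (integrableOn_rpow_mul_exp_neg_mul_rpow (s := 1) (p := 1) (by norm_num) one_pos hc))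
      (fun t _ => ?_) measurableSet_Ioi
    simp only [rpow_one, gammaTwoPDF]; ring_nf
  exact (continuous_gammaTwoPDF.integrableOn_Icc.union hpos).mono_set
    (fun t ht => (le_or_gt t 0).imp (fun h => ⟨le_of_lt ht, h⟩) id)

lemma hasDerivAt_gammaTwo_survival (t : ℝ) :
    HasDerivAt (fun t => -((1 + c * t) * exp (-(c * t)))) (gammaTwoPDF c t) t := by
  have hlin : HasDerivAt (fun t => c * t) c t := by simpa using (hasDerivAt_id t).const_mul c
  refine ((hlin.const_add 1).mul hlin.neg.exp).neg.congr_deriv ?_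
  simp only [gammaTwoPDF, Pi.neg_apply]; ring

lemma integral_Ioi_gammaTwoPDF (hc : 0 < c) (T : ℝ) :
    ∫ t in Ioi T, gammaTwoPDF c t = (1 + c * T) * exp (-(c * T)) := by
  have hlim : Tendsto (fun t => -((1 + c * t) * exp (-(c * t)))) atTop (𝓝 0) := by
    have h : Tendsto (fun x : ℝ => exp (-x) + x * exp (-x)) atTop (𝓝 0) := by
      simpa using tendsto_exp_neg_atTop_nhds_zero.add (tendsto_pow_mul_exp_neg_atTop_nhds_zero 1)
    simpa [add_mul] using (h.comp (tendsto_id.const_mul_atTop hc)).neg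
  rw [integral_Ioi_of_hasDerivAt_of_tendsto (by fun_prop : Continuous _).continuousWithinAt
    (fun t _ => hasDerivAt_gammaTwo_survival t) (integrableOn_gammaTwoPDF_Ioi hc T) hlim]
  ring

end GammaTwo

section Inversion

variable {b : ℝ}

lemma image_const_div_Ioi_zero (hb : 0 < b) : (fun u => b / u) '' Ioi 0 = Ioi 0 :=
  Subset.antisymm (image_subset_iff.2 fun _ hu => div_pos hb hu)
    fun v hv => ⟨b / v, div_pos hb hv, div_div_cancel₀ hb.ne'⟩

lemma injective_const_div (hb : b ≠ 0) : Function.Injective (fun u : ℝ => b / u) :=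
  fun _ _ h => inv_injective (mul_left_cancel₀ hb h)

lemma hasDerivAt_const_div {u : ℝ} (hu : u ≠ 0) : HasDerivAt (fun u => b / u) (-(b / u ^ 2)) u := by
  simpa [div_eq_mul_inv] using (hasDerivAt_inv hu).const_mul b

lemma integral_Ioi_div_sq_mul_comp_const_div (hb : 0 < b) (g : ℝ → ℝ) :
    ∫ u in Ioi 0, b / u ^ 2 * g (b / u) = ∫ u in Ioi 0, g u := by
  have h := integral_image_eq_integral_abs_deriv_smul measurableSet_Ioi
    (fun u hu => (hasDerivAt_const_div (mem_Ioi.1 hu).ne').hasDerivWithinAt)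
    (injective_const_div hb.ne').injOn g
  rw [image_const_div_Ioi_zero hb] at h
  rw [h]
  refine setIntegral_congr_fun measurableSet_Ioi fun u hu => ?_
  rw [abs_neg, abs_of_pos (div_pos hb (pow_pos hu 2)), smul_eq_mul]

lemma integrableOn_Ioi_div_sq_mul_comp_const_div_iff (hb : 0 < b) (g : ℝ → ℝ) :
    IntegrableOn (fun u => b / u ^ 2 * g (b / u)) (Ioi 0) ↔ IntegrableOn g (Ioi 0) := by
  have h := integrableOn_image_iff_integrableOn_abs_deriv_smul measurableSet_Ioi
    (fun u hu => (hasDerivAt_const_div (mem_Ioi.1 hu).ne').hasDerivWithinAt)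
    (injective_const_div hb.ne').injOn g
  rw [image_const_div_Ioi_zero hb] at h
  rw [h]
  refine integrableOn_congr_fun (fun u hu => ?_) measurableSet_Ioi
  rw [abs_neg, abs_of_pos (div_pos hb (pow_pos hu 2)), smul_eq_mul]

end Inversion

section Glasser

variable {b : ℝ}

lemma image_sub_const_div_Ioi_zero (hb : 0 < b) : (fun u => u - b / u) '' Ioi 0 = univ := by
  refine eq_univ_of_forall fun v => ?_
  set s := √(v ^ 2 + 4 * b)
  have hs : s ^ 2 = v ^ 2 + 4 * b := sq_sqrt (by positivity)
  have hvs : 0 < v + s := by nlinarith [sqrt_nonneg (v ^ 2 + 4 * b), sq_nonneg (s + v)]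
  refine ⟨(v + s) / 2, half_pos hvs, ?_⟩
  field_simp
  nlinarith

lemma injOn_sub_const_div (hb : 0 ≤ b) : InjOn (fun u => u - b / u) (Ioi 0) := by
  intro x hx y hy h
  have hx : 0 < x := hx
  have hy : 0 < y := hy
  have hxy : (x - y) * (x * y + b) = 0 := by
    field_simp at h
    linear_combination h
  exact sub_eq_zero.1 ((mul_eq_zero.1 hxy).resolve_right (by nlinarith [mul_pos hx hy]))

lemma hasDerivAt_sub_const_div {u : ℝ} (hu : u ≠ 0) :
    HasDerivAt (fun u => u - b / u) (1 + b / u ^ 2) u :=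
  ((hasDerivAt_id u).sub (hasDerivAt_const_div hu)).congr_deriv (sub_neg_eq_add 1 _)

lemma integral_Ioi_one_add_div_sq_mul_comp_sub_const_div (hb : 0 < b) (g : ℝ → ℝ) :
    ∫ u in Ioi 0, (1 + b / u ^ 2) * g (u - b / u) = ∫ v, g v := by
  have h := integral_image_eq_integral_abs_deriv_smul measurableSet_Ioi
    (fun u hu => (hasDerivAt_sub_const_div (mem_Ioi.1 hu).ne').hasDerivWithinAt)
    (injOn_sub_const_div hb.le) g
  rw [image_sub_const_div_Ioi_zero hb, Measure.restrict_univ] at h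
  rw [h]
  refine setIntegral_congr_fun measurableSet_Ioi fun u hu => ?_
  have : 0 < 1 + b / u ^ 2 := by have := mem_Ioi.1 hu; positivity
  rw [abs_of_pos this, smul_eq_mul]

lemma integrableOn_Ioi_one_add_div_sq_mul_comp_sub_const_div_iff (hb : 0 < b) (g : ℝ → ℝ) :
    IntegrableOn (fun u => (1 + b / u ^ 2) * g (u - b / u)) (Ioi 0) ↔ Integrable g := by
  have h := integrableOn_image_iff_integrableOn_abs_deriv_smul measurableSet_Ioi
    (fun u hu => (hasDerivAt_sub_const_div (mem_Ioi.1 hu).ne').hasDerivWithinAt)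
    (injOn_sub_const_div hb.le) g
  rw [image_sub_const_div_Ioi_zero hb, integrableOn_univ] at h
  rw [h]
  refine integrableOn_congr_fun (fun u hu => ?_) measurableSet_Ioi
  have : 0 < 1 + b / u ^ 2 := by have := mem_Ioi.1 hu; positivity
  rw [abs_of_pos this, smul_eq_mul]

lemma const_div_sub_const_div_const_div (hb : b ≠ 0) (u : ℝ) :
    b / u - b / (b / u) = -(u - b / u) := by
  rw [div_div_cancel₀ hb]; ring

lemma integral_Ioi_div_sq_mul_comp_sub_const_div (hb : 0 < b) {g : ℝ → ℝ}
    (heven : ∀ v, g (-v) = g v) :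
    ∫ u in Ioi 0, b / u ^ 2 * g (u - b / u) = ∫ u in Ioi 0, g (u - b / u) := by
  simpa only [const_div_sub_const_div_const_div hb.ne', heven] using
    integral_Ioi_div_sq_mul_comp_const_div hb fun u => g (u - b / u)

lemma integrableOn_Ioi_div_sq_mul_comp_sub_const_div_iff (hb : 0 < b) {g : ℝ → ℝ}
    (heven : ∀ v, g (-v) = g v) :
    IntegrableOn (fun u => b / u ^ 2 * g (u - b / u)) (Ioi 0) ↔
      IntegrableOn (fun u => g (u - b / u)) (Ioi 0) := by
  simpa only [const_div_sub_const_div_const_div hb.ne', heven] using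
    integrableOn_Ioi_div_sq_mul_comp_const_div_iff hb fun u => g (u - b / u)

lemma integrableOn_Ioi_comp_sub_const_div (hb : 0 < b) {g : ℝ → ℝ} (hg : Integrable g) :
    IntegrableOn (fun u => g (u - b / u)) (Ioi 0) := by
  have hweighted := (integrableOn_Ioi_one_add_div_sq_mul_comp_sub_const_div_iff hb g).2 hg
  have hinv : ContinuousOn (fun u : ℝ => (1 + b / u ^ 2)⁻¹) (Ioi 0) := by
    refine ContinuousOn.inv₀ (by fun_prop (disch := exact fun u hu => (pow_pos hu 2).ne'))
      fun u hu => ?_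
    have := mem_Ioi.1 hu; positivity
  refine IntegrableOn.congr_fun
    (hweighted.bdd_mul (c := 1) (hinv.aestronglyMeasurable measurableSet_Ioi) ?_)
    (fun u hu => ?_) measurableSet_Ioi
  · filter_upwards [ae_restrict_mem measurableSet_Ioi] with u hu
    have := mem_Ioi.1 hu
    rw [norm_inv, Real.norm_of_nonneg (by positivity)]
    exact inv_le_one_of_one_le₀ (le_add_of_nonneg_right (by positivity))
  · have : 0 < 1 + b / u ^ 2 := by have := mem_Ioi.1 hu; positivity
    exact inv_mul_cancel_left₀ this.ne' _

/-- Glasser's master theorem for an even integrand, on the half-line. -/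
theorem integral_Ioi_comp_sub_const_div (hb : 0 < b) {g : ℝ → ℝ} (hg : Integrable g)
    (heven : ∀ v, g (-v) = g v) :
    ∫ u in Ioi 0, g (u - b / u) = (∫ v, g v) / 2 := by
  have hint := integrableOn_Ioi_comp_sub_const_div hb hg
  have hsplit := integral_Ioi_one_add_div_sq_mul_comp_sub_const_div hb g
  simp only [add_mul, one_mul] at hsplit
  rw [integral_add hint ((integrableOn_Ioi_div_sq_mul_comp_sub_const_div_iff hb heven).2 hint),
    integral_Ioi_div_sq_mul_comp_sub_const_div hb heven] at hsplit
  linarith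

end Glasser

lemma sqrt_div_lt_iff_div_sq_lt {A t u : ℝ} (ht : 0 < t) (hu : 0 < u) :
    √(A / t) < u ↔ A / u ^ 2 < t := by
  rw [sqrt_lt' hu, div_lt_iff₀ ht, div_lt_iff₀ (pow_pos hu 2), mul_comm]

lemma integral_Ioi_mul_integral_Ioi_sqrt_div_comm {A : ℝ} (hA : 0 ≤ A) {w g : ℝ → ℝ}
    (hw : IntegrableOn w (Ioi 0)) (hg : IntegrableOn g (Ioi 0)) :
    ∫ t in Ioi 0, w t * ∫ u in Ioi √(A / t), g u =
      ∫ u in Ioi 0, g u * ∫ t in Ioi (A / u ^ 2), w t := by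
  set S := {p : ℝ × ℝ | √(A / p.1) < p.2}
  have hS : MeasurableSet S := measurableSet_lt (by fun_prop) measurable_snd
  set F : ℝ → ℝ → ℝ := fun t u => S.indicator (fun p => w p.1 * g p.2) (t, u)
  have hF : Integrable (Function.uncurry F)
      ((volume.restrict (Ioi 0)).prod (volume.restrict (Ioi 0))) :=
    (hw.mul_prod hg).indicator hS
  have hslice_t : ∀ t, ∫ u in Ioi 0, F t u = w t * ∫ u in Ioi √(A / t), g u := by
    intro t
    have : F t = (Ioi √(A / t)).indicator fun u => w t * g u := by
      ext u; simp [F, S, indicator_apply]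
    rw [this, setIntegral_indicator measurableSet_Ioi, Ioi_inter_Ioi,
      sup_eq_right.2 (sqrt_nonneg _), integral_const_mul]
  have hslice_u : ∀ u ∈ Ioi (0 : ℝ), ∫ t in Ioi 0, F t u = g u * ∫ t in Ioi (A / u ^ 2), w t := by
    intro u hu
    have : EqOn (F · u) ((Ioi (A / u ^ 2)).indicator fun t => g u * w t) (Ioi 0) := by
      intro t ht
      simp [F, S, indicator_apply, sqrt_div_lt_iff_div_sq_lt (mem_Ioi.1 ht) (mem_Ioi.1 hu),
        mul_comm]
    rw [setIntegral_congr_fun measurableSet_Ioi this, setIntegral_indicator measurableSet_Ioi,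
      Ioi_inter_Ioi, sup_eq_right.2 (by positivity), integral_const_mul]
  simp_rw [← hslice_t]
  rw [integral_integral_swap hF]
  exact setIntegral_congr_fun measurableSet_Ioi hslice_u

lemma exp_neg_sq_mul_exp_neg_div_sq {b u : ℝ} (hu : u ≠ 0) :
    exp (-u ^ 2) * exp (-(b ^ 2 / u ^ 2)) = exp (-(2 * b)) * exp (-(u - b / u) ^ 2) := by
  rw [← exp_add, ← exp_add]
  congr 1
  field_simp
  ring

lemma integral_Ioi_one_add_sq_div_sq_mul_exp_neg_sq_sub_div {b : ℝ} (hb : 0 < b) :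
    ∫ u in Ioi 0, (1 + b ^ 2 / u ^ 2) * exp (-(u - b / u) ^ 2) = (1 + b) * (√π / 2) := by
  set g : ℝ → ℝ := fun v => exp (-v ^ 2)
  have hg : Integrable g := by simpa using integrable_exp_neg_mul_sq one_pos
  have heven : ∀ v, g (-v) = g v := fun v => by simp [g]
  have hgauss : ∫ u in Ioi 0, g (u - b / u) = √π / 2 := by
    rw [integral_Ioi_comp_sub_const_div hb hg heven]
    congr 1
    simpa [g] using integral_gaussian 1
  have hint := integrableOn_Ioi_comp_sub_const_div hb hg
  have hint_div := (integrableOn_Ioi_div_sq_mul_comp_sub_const_div_iff hb heven).2 hint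
  have hweight : ∀ u, (1 + b ^ 2 / u ^ 2) * g (u - b / u) =
      g (u - b / u) + b * (b / u ^ 2 * g (u - b / u)) := fun u => by ring
  simp_rw [show ∀ u, exp (-(u - b / u) ^ 2) = g (u - b / u) from fun u => rfl, hweight]
  rw [integral_add hint (hint_div.const_mul b), integral_const_mul,
    integral_Ioi_div_sq_mul_comp_sub_const_div hb heven, hgauss]
  ring

theorem integral_Ioi_erfc_sqrt_div_mul_gammaTwoPDF {A c : ℝ} (hA : 0 < A) (hc : 0 < c) :
    ∫ t in Ioi 0, erfc √(A / t) * gammaTwoPDF c t = exp (-(2 * √(c * A))) * (1 + √(c * A)) := by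
  set b := √(c * A)
  have hb : 0 < b := sqrt_pos.2 (mul_pos hc hA)
  have hb2 : b ^ 2 = c * A := sq_sqrt (mul_pos hc hA).le
  have hinner : ∀ u ∈ Ioi (0 : ℝ), exp (-u ^ 2) * ∫ t in Ioi (A / u ^ 2), gammaTwoPDF c t =
      exp (-(2 * b)) * ((1 + b ^ 2 / u ^ 2) * exp (-(u - b / u) ^ 2)) := by
    intro u hu
    have h := exp_neg_sq_mul_exp_neg_div_sq (b := b) (mem_Ioi.1 hu).ne'
    rw [hb2, mul_div_assoc] at h
    rw [integral_Ioi_gammaTwoPDF hc, hb2, mul_div_assoc]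
    linear_combination (1 + c * (A / u ^ 2)) * h
  calc ∫ t in Ioi 0, erfc √(A / t) * gammaTwoPDF c t
      = 2 / √π * ∫ t in Ioi 0, gammaTwoPDF c t * ∫ u in Ioi √(A / t), exp (-u ^ 2) := by
        rw [← integral_const_mul]
        congr 1 with t
        rw [erfc]
        ring
    _ = 2 / √π * ∫ u in Ioi 0, exp (-u ^ 2) * ∫ t in Ioi (A / u ^ 2), gammaTwoPDF c t := by
        rw [integral_Ioi_mul_integral_Ioi_sqrt_div_comm hA.le (integrableOn_gammaTwoPDF_Ioi hc 0)
          (by simpa using (integrable_exp_neg_mul_sq one_pos).integrableOn)]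
    _ = 2 / √π * (exp (-(2 * b)) * ((1 + b) * (√π / 2))) := by
        rw [setIntegral_congr_fun measurableSet_Ioi hinner, integral_const_mul,
          integral_Ioi_one_add_sq_div_sq_mul_exp_neg_sq_sub_div hb]
    _ = exp (-(2 * b)) * (1 + b) := by
        field_simp

theorem gamma_reset_success_prob (L D r : ℝ) (hL : 0 < L) (hD : 0 < D) (hr : 0 < r) :
    (∫ t in Set.Ioi (0 : ℝ),
        erfc (Real.sqrt (L ^ 2 / (4 * D * t))) * (4 * r ^ 2 * t * Real.exp (-2 * r * t))) =
      Real.exp (-Real.sqrt (2 * r * L ^ 2 / D)) * (1 + Real.sqrt (r * L ^ 2 / (2 * D))) := by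
  have hintegrand : ∀ t, erfc √(L ^ 2 / (4 * D * t)) * (4 * r ^ 2 * t * exp (-2 * r * t)) =
      erfc √(L ^ 2 / (4 * D) / t) * gammaTwoPDF (2 * r) t := fun t => by
    rw [div_div, gammaTwoPDF]; ring_nf
  have hb : √(2 * r * (L ^ 2 / (4 * D))) = √(r * L ^ 2 / (2 * D)) := by
    congr 1; field_simp; ring
  have h2b : 2 * √(r * L ^ 2 / (2 * D)) = √(2 * r * L ^ 2 / D) := by
    rw [show 2 * r * L ^ 2 / D = 2 ^ 2 * (r * L ^ 2 / (2 * D)) by field_simp,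
      sqrt_mul (by positivity), sqrt_sq zero_le_two]
  simp_rw [hintegrand]
  rw [integral_Ioi_erfc_sqrt_div_mul_gammaTwoPDF (by positivity) (by positivity), hb, h2b]
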